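/- (Corollary 3.3) Let n ≥ 1 be a natural number, 0 < q < p ≤ 1, 0 < α ≤ 1 and M > 0. Then for every f ∈ W̃_{α,[0,∞)} with constant M (i.e. |f(t) − f(y)| ≤ M·|t/(1+t) − y/(1+y)|^α for all t,y ≥ 0) and every x ≥ 0, | L_n^{p,q}(f;x) − pq·f(x) | ≤ M·δ_n(x)^{α/2}. -/

import Mathlib

open Finset Filter
open scoped Classical

noncomputable section

/-- The `(p,q)`-integer `[n]_{p,q} = (p^n - q^n)/(p - q)`. -/
def pqInt (p q : ℝ) (n : ℕ) : ℝ := (p ^ n - q ^ n) / (p - q)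

/-- The `(p,q)`-factorial. -/
def pqFact (p q : ℝ) : ℕ → ℝ
  | 0 => 1
  | n + 1 => pqFact p q n * pqInt p q (n + 1)

/-- The `(p,q)`-binomial coefficient. -/
def pqBinom (p q : ℝ) (n k : ℕ) : ℝ :=
  pqFact p q n / (pqFact p q k * pqFact p q (n - k))

/-- `ℓ_n^{p,q}(x) = ∏_{s=0}^{n-1} (p^s + q^s x)`. -/
def pqEll (p q : ℝ) (n : ℕ) (x : ℝ) : ℝ :=
  ∏ s ∈ Finset.range n, (p ^ s + q ^ s * x)

/-- The node `p^{n-k+1}[k]_{p,q} / ([n-k+1]_{p,q} q^k)`. -/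
def pqNode (p q : ℝ) (n k : ℕ) : ℝ :=
  p ^ (n - k + 1) * pqInt p q k / (pqInt p q (n - k + 1) * q ^ k)

/-- The `(p,q)`-Bleimann–Butzer–Hahn operator. -/
def bbh (p q : ℝ) (n : ℕ) (f : ℝ → ℝ) (x : ℝ) : ℝ :=
  (p * q / pqEll p q n x) *
    ∑ k ∈ Finset.range (n + 1),
      f (pqNode p q n k) * p ^ ((n - k) * (n - k - 1) / 2) *
        q ^ (k * (k - 1) / 2) * pqBinom p q n k * x ^ k

/-- `δ_n(x)` from Theorem 3.1. -/
def pqDelta (p q : ℝ) (n : ℕ) (x : ℝ) : ℝ :=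
  (x / (1 + x)) ^ 2 *
      (p ^ 2 * q ^ 3 * pqInt p q n * pqInt p q (n - 1) / (pqInt p q (n + 1)) ^ 2 *
          ((1 + x) / (p + q * x)) -
        2 * p * q * pqInt p q n / pqInt p q (n + 1) + 1) +
    p ^ (n + 2) * q * pqInt p q n / (pqInt p q (n + 1)) ^ 2 * (x / (1 + x))

/-- Statistical convergence of a real sequence. -/
def StatConv (a : ℕ → ℝ) (l : ℝ) : Prop :=
  ∀ ε > (0 : ℝ), Tendsto (fun n : ℕ =>
    (((Finset.range (n + 1)).filter (fun k => ε ≤ |a k - l|)).card : ℝ) / n)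
    atTop (nhds 0)

/-- A modulus of continuity. -/
def IsModulus (ω : ℝ → ℝ) : Prop :=
  (∀ δ, 0 ≤ δ → 0 ≤ ω δ) ∧
  (∀ δ₁ δ₂, 0 ≤ δ₁ → δ₁ ≤ δ₂ → ω δ₁ ≤ ω δ₂) ∧
  (∀ δ₁ δ₂, 0 ≤ δ₁ → 0 ≤ δ₂ → ω (δ₁ + δ₂) ≤ ω δ₁ + ω δ₂) ∧
  Tendsto ω (nhdsWithin 0 (Set.Ioi 0)) (nhds 0)

/-- Membership in the class `H_ω`. -/
def MemHomega (ω f : ℝ → ℝ) : Prop :=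
  ∀ x y : ℝ, 0 ≤ x → 0 ≤ y → |f x - f y| ≤ ω |x / (1 + x) - y / (1 + y)|

/-- The modulus `ω̃(f; δ)`. -/
def omegaTilde (f : ℝ → ℝ) (δ : ℝ) : ℝ :=
  sSup {d | ∃ t x : ℝ, 0 ≤ t ∧ 0 ≤ x ∧ |t / (1 + t) - x / (1 + x)| ≤ δ ∧ d = |f t - f x|}

/-- The bivariate `(p,q)`-Bleimann–Butzer–Hahn operator. -/
def bbh2 (p₁ p₂ q₁ q₂ : ℝ) (n₁ n₂ : ℕ) (f : ℝ → ℝ → ℝ) (x y : ℝ) : ℝ :=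
  (p₁ * p₂ * q₁ * q₂ / (pqEll p₁ q₁ n₁ x * pqEll p₂ q₂ n₂ y)) *
    ∑ k₁ ∈ Finset.range (n₁ + 1), ∑ k₂ ∈ Finset.range (n₂ + 1),
      f (pqNode p₁ q₁ n₁ k₁) (pqNode p₂ q₂ n₂ k₂) *
        p₁ ^ ((n₁ - k₁) * (n₁ - k₁ - 1) / 2) * q₁ ^ (k₁ * (k₁ - 1) / 2) *
        p₂ ^ ((n₂ - k₂) * (n₂ - k₂ - 1) / 2) * q₂ ^ (k₂ * (k₂ - 1) / 2) *
        pqBinom p₁ q₁ n₁ k₁ * pqBinom p₂ q₂ n₂ k₂ * x ^ k₁ * y ^ k₂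

/-- Statistical convergence of a double real sequence (Pringsheim sense). -/
def StatConv2 (a : ℕ → ℕ → ℝ) (l : ℝ) : Prop :=
  ∀ ε > (0 : ℝ), Tendsto (fun N : ℕ × ℕ =>
    ((((Finset.range (N.1 + 1)) ×ˢ (Finset.range (N.2 + 1))).filter
        (fun jk => ε ≤ |a jk.1 jk.2 - l|)).card : ℝ) / (N.1 * N.2))
    atTop (nhds 0)

/-- A bivariate modulus of continuity. -/
def IsModulus2 (ω : ℝ → ℝ → ℝ) : Prop :=
  (∀ a b, 0 ≤ a → 0 ≤ b → 0 ≤ ω a b) ∧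
  (∀ a a' b, 0 ≤ a → a ≤ a' → 0 ≤ b → ω a b ≤ ω a' b) ∧
  (∀ a b b', 0 ≤ a → 0 ≤ b → b ≤ b' → ω a b ≤ ω a b') ∧
  (∀ a a' b, 0 ≤ a → 0 ≤ a' → 0 ≤ b → ω (a + a') b ≤ ω a b + ω a' b) ∧
  (∀ a b b', 0 ≤ a → 0 ≤ b → 0 ≤ b' → ω a (b + b') ≤ ω a b + ω a b') ∧
  Tendsto (fun d : ℝ × ℝ => ω d.1 d.2)
    (nhdsWithin (0, 0) (Set.Ioi 0 ×ˢ Set.Ioi 0)) (nhds 0)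

/-- Membership in the class `H_{ω₂}`. -/
def MemHomega2 (ω g : ℝ → ℝ → ℝ) : Prop :=
  ∀ u₁ v₁ u₂ v₂ : ℝ, 0 ≤ u₁ → 0 ≤ v₁ → 0 ≤ u₂ → 0 ≤ v₂ →
    |g u₁ v₁ - g u₂ v₂| ≤
      ω |u₁ / (1 + u₁) - u₂ / (1 + u₂)| |v₁ / (1 + v₁) - v₂ / (1 + v₂)|

/-- The bivariate modulus `ω̃(g; δ₁, δ₂)`. -/
def omegaTilde2 (g : ℝ → ℝ → ℝ) (δ₁ δ₂ : ℝ) : ℝ :=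
  sSup {d | ∃ t s x y : ℝ, 0 ≤ t ∧ 0 ≤ s ∧ 0 ≤ x ∧ 0 ≤ y ∧
    |t / (1 + t) - x / (1 + x)| ≤ δ₁ ∧ |s / (1 + s) - y / (1 + y)| ≤ δ₂ ∧
    d = |g t s - g x y|}

/-!
`L_n^{p,q}(f;x)` is a positive combination `∑ w_k f(t_k)` of the values of `f` at the nodes `t_k`,
the weights being the terms of the `(p,q)`-Gauss binomial formula for `ℓ_n^{p,q}(x)`, scaled to
total mass `pq ≤ 1`. Since `t_k/(1+t_k) = p^{n-k+1}[k]/[n+1]`, the Lipschitz condition and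
Hölder's inequality with exponent `2/α` bound `|L_n f - pq f(x)|` by `M` times the `α/2`-th power
of the second central moment `∑ w_k (t_k/(1+t_k) - x/(1+x))²`. The first two moments follow from
the Gauss formula after absorbing the factors `[k]` into the `(p,q)`-binomial coefficients, and the
resulting moment is at most `δ_n(x)` because `q < p ≤ 1`.
-/

variable {p q : ℝ}

lemma pqInt_zero : pqInt p q 0 = 0 := by simp [pqInt]

lemma pqInt_nonneg (hq : 0 ≤ q) (hqp : q < p) (n : ℕ) : 0 ≤ pqInt p q n :=
  div_nonneg (sub_nonneg.2 (pow_le_pow_left₀ hq hqp.le n)) (sub_pos.2 hqp).le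

lemma pqInt_pos (hq : 0 ≤ q) (hqp : q < p) {n : ℕ} (hn : n ≠ 0) : 0 < pqInt p q n :=
  div_pos (sub_pos.2 (pow_lt_pow_left₀ hqp hq hn)) (sub_pos.2 hqp)

lemma pqInt_add (hpq : p ≠ q) (a b : ℕ) :
    pqInt p q (a + b) = q ^ b * pqInt p q a + p ^ a * pqInt p q b := by
  have : p - q ≠ 0 := sub_ne_zero.2 hpq
  simp only [pqInt]
  field_simp
  ring

lemma pqInt_succ (hpq : p ≠ q) (n : ℕ) : pqInt p q (n + 1) = p ^ n + q * pqInt p q n := by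
  have h1 : pqInt p q 1 = 1 := by simp [pqInt, sub_ne_zero.2 hpq]
  rw [pqInt_add hpq, h1, pow_one]
  ring

lemma pqFact_pos (hq : 0 ≤ q) (hqp : q < p) (n : ℕ) : 0 < pqFact p q n := by
  induction n with
  | zero => exact one_pos
  | succ n ih => exact mul_pos ih (pqInt_pos hq hqp n.succ_ne_zero)

lemma pqBinom_pos (hq : 0 ≤ q) (hqp : q < p) (n k : ℕ) : 0 < pqBinom p q n k :=
  div_pos (pqFact_pos hq hqp n) (mul_pos (pqFact_pos hq hqp k) (pqFact_pos hq hqp _))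

lemma pqBinom_zero_right (hq : 0 ≤ q) (hqp : q < p) (n : ℕ) : pqBinom p q n 0 = 1 := by
  simp [pqBinom, pqFact, (pqFact_pos hq hqp n).ne']

lemma pqBinom_self (hq : 0 ≤ q) (hqp : q < p) (n : ℕ) : pqBinom p q n n = 1 := by
  simp [pqBinom, pqFact, (pqFact_pos hq hqp n).ne']

lemma pqBinom_succ_succ (hq : 0 ≤ q) (hqp : q < p) {m j : ℕ} (hj : j < m) :
    pqBinom p q (m + 1) (j + 1)
      = q ^ (j + 1) * pqBinom p q m (j + 1) + p ^ (m - j) * pqBinom p q m j := by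
  obtain ⟨k, rfl⟩ := Nat.exists_eq_add_of_lt hj
  have hF := pqFact_pos hq hqp
  have hI (i : ℕ) : pqInt p q (i + 1) ≠ 0 := (pqInt_pos hq hqp i.succ_ne_zero).ne'
  have hsum := pqInt_add hqp.ne' (k + 1) (j + 1)
  rw [show k + 1 + (j + 1) = j + k + 1 + 1 by ring] at hsum
  simp only [pqBinom, show j + k + 1 + 1 - (j + 1) = k + 1 by omega,
    show j + k + 1 - (j + 1) = k by omega, show j + k + 1 - j = k + 1 by omega, pqFact]
  field_simp [(hF (j + k + 1)).ne', (hF j).ne', (hF k).ne', hI k, hI j]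
  rw [hsum]
  ring

lemma pqBinom_succ_mul_pqInt (hq : 0 ≤ q) (hqp : q < p) {m j : ℕ} (hj : j ≤ m) :
    pqBinom p q (m + 1) (j + 1) * pqInt p q (j + 1) = pqInt p q (m + 1) * pqBinom p q m j := by
  obtain ⟨k, rfl⟩ := Nat.exists_eq_add_of_le hj
  have hF := pqFact_pos hq hqp
  simp only [pqBinom, show j + k + 1 - (j + 1) = k by omega, show j + k - j = k by omega, pqFact]
  field_simp [(hF (j + k)).ne', (hF j).ne', (hF k).ne', (pqInt_pos hq hqp j.succ_ne_zero).ne']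

def gaussTerm (p q : ℝ) (n : ℕ) (a b : ℝ) (k : ℕ) : ℝ :=
  p ^ (n - k).choose 2 * q ^ k.choose 2 * pqBinom p q n k * a ^ (n - k) * b ^ k

def gaussProd (p q : ℝ) (n : ℕ) (a b : ℝ) : ℝ :=
  ∏ s ∈ range n, (p ^ s * a + q ^ s * b)

lemma pqEll_eq_gaussProd (n : ℕ) (x : ℝ) : pqEll p q n x = gaussProd p q n 1 x := by
  simp [pqEll, gaussProd]

lemma gaussProd_succ' (n : ℕ) (a b : ℝ) :
    gaussProd p q (n + 1) a b = (a + b) * gaussProd p q n (p * a) (q * b) := by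
  simp only [gaussProd, prod_range_succ', pow_succ, pow_zero, one_mul, mul_assoc]
  ring

lemma gaussProd_pos (hq : 0 ≤ q) (hp : 0 < p) (n : ℕ) {a b : ℝ} (ha : 0 < a) (hb : 0 ≤ b) :
    0 < gaussProd p q n a b :=
  prod_pos fun s _ => by positivity

lemma gaussTerm_nonneg (hq : 0 ≤ q) (hqp : q < p) (n : ℕ) {a b : ℝ} (ha : 0 ≤ a)
    (hb : 0 ≤ b) (k : ℕ) : 0 ≤ gaussTerm p q n a b k := by
  have := (pqBinom_pos hq hqp n k).le
  have : 0 ≤ p := hq.trans hqp.le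
  unfold gaussTerm
  positivity

lemma gaussTerm_mul_pow (n : ℕ) (a b c : ℝ) (k : ℕ) :
    gaussTerm p q n a b k * c ^ (n - k) = gaussTerm p q n (c * a) b k := by
  simp only [gaussTerm, mul_pow]
  ring

lemma gaussTerm_zero_right (hq : 0 ≤ q) (hqp : q < p) (m : ℕ) (a b : ℝ) :
    gaussTerm p q (m + 1) a b 0 = a * gaussTerm p q m (p * a) (q * b) 0 := by
  simp only [gaussTerm, Nat.choose_succ_succ, pqBinom_zero_right hq hqp, Nat.choose_one_right,
    Nat.sub_zero, Nat.choose_zero_succ, pow_zero, pow_add, mul_pow]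
  ring

lemma gaussTerm_self (hq : 0 ≤ q) (hqp : q < p) (m : ℕ) (a b : ℝ) :
    gaussTerm p q (m + 1) a b (m + 1) = b * gaussTerm p q m (p * a) (q * b) m := by
  simp only [gaussTerm, Nat.choose_succ_succ, pqBinom_self hq hqp, Nat.choose_one_right,
    Nat.sub_self, Nat.choose_zero_succ, pow_zero, pow_add, mul_pow]
  ring

lemma gaussTerm_succ_succ (hq : 0 ≤ q) (hqp : q < p) {m j : ℕ} (hj : j < m) (a b : ℝ) :
    gaussTerm p q (m + 1) a b (j + 1)
      = a * gaussTerm p q m (p * a) (q * b) (j + 1) + b * gaussTerm p q m (p * a) (q * b) j := by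
  obtain ⟨k, rfl⟩ := Nat.exists_eq_add_of_lt hj
  simp only [gaussTerm, pqBinom_succ_succ hq hqp hj, show j + k + 1 + 1 - (j + 1) = k + 1 by omega,
    show j + k + 1 - (j + 1) = k by omega, show j + k + 1 - j = k + 1 by omega,
    Nat.choose_succ_succ, Nat.choose_one_right, pow_add, mul_pow]
  ring

theorem sum_gaussTerm (hq : 0 ≤ q) (hqp : q < p) (n : ℕ) (a b : ℝ) :
    ∑ k ∈ range (n + 1), gaussTerm p q n a b k = gaussProd p q n a b := by
  induction n generalizing a b with
  | zero => simp [gaussTerm, gaussProd, pqBinom, pqFact]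
  | succ m ih =>
    set g := gaussTerm p q m (p * a) (q * b)
    rw [gaussProd_succ', ← ih, sum_range_succ, sum_range_succ',
      sum_congr rfl fun j hj => gaussTerm_succ_succ hq hqp (mem_range.1 hj) a b,
      gaussTerm_zero_right hq hqp, gaussTerm_self hq hqp, sum_add_distrib,
      ← mul_sum, ← mul_sum]
    linear_combination -a * sum_range_succ' g m - b * sum_range_succ g m

lemma gaussTerm_succ_mul_pqInt (hq : 0 ≤ q) (hqp : q < p) {m j : ℕ} (hj : j ≤ m) (a b : ℝ) :
    gaussTerm p q (m + 1) a b (j + 1) * pqInt p q (j + 1)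
      = pqInt p q (m + 1) * b * gaussTerm p q m a (q * b) j := by
  simp only [gaussTerm, Nat.add_sub_add_right, Nat.choose_succ_succ, Nat.choose_one_right,
    pow_add, mul_pow]
  linear_combination (p ^ (m - j).choose 2 * q ^ j.choose 2 * q ^ j * a ^ (m - j) * b ^ j * b) *
    pqBinom_succ_mul_pqInt hq hqp hj

lemma sum_gaussTerm_mul_pqInt_mul (hq : 0 ≤ q) (hqp : q < p) (m : ℕ) (a b : ℝ)
    (g : ℕ → ℝ) :
    ∑ k ∈ range (m + 2), gaussTerm p q (m + 1) a b k * pqInt p q k * g k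
      = pqInt p q (m + 1) * b *
          ∑ j ∈ range (m + 1), gaussTerm p q m a (q * b) j * g (j + 1) := by
  rw [sum_range_succ', pqInt_zero, mul_zero, zero_mul, add_zero, mul_sum]
  refine sum_congr rfl fun j hj => ?_
  rw [gaussTerm_succ_mul_pqInt hq hqp (Nat.lt_succ_iff.1 (mem_range.1 hj))]
  ring

lemma sum_gaussTerm_mul_pqInt (hq : 0 ≤ q) (hqp : q < p) (n : ℕ) (a b : ℝ) :
    (a + b) * ∑ k ∈ range (n + 1), gaussTerm p q n a b k * (p ^ (n - k) * pqInt p q k)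
      = pqInt p q n * b * gaussProd p q n a b := by
  cases n with
  | zero => simp [pqInt_zero]
  | succ m =>
    have h := sum_gaussTerm_mul_pqInt_mul hq hqp m (p * a) b fun _ => 1
    simp only [mul_one] at h
    rw [sum_gaussTerm hq hqp] at h
    rw [gaussProd_succ', mul_left_comm _ (a + b), ← h]
    congr 1
    exact sum_congr rfl fun k _ => by rw [← gaussTerm_mul_pow]; ring

lemma sum_gaussTerm_mul_sq_pqInt (hq : 0 ≤ q) (hqp : q < p) (n : ℕ) (a b : ℝ) :
    (a + b) * (p * a + q * b) *
        ∑ k ∈ range (n + 1), gaussTerm p q n a b k * (p ^ (n - k + 1) * pqInt p q k) ^ 2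
      = pqInt p q n * b * (p ^ (n + 1) * (p * a + q * b) + p ^ 2 * q ^ 2 * b * pqInt p q (n - 1)) *
          gaussProd p q n a b := by
  cases n with
  | zero => simp [pqInt_zero]
  | succ m =>
    -- `[j + 1] = p ^ j + q [j]` splits the shifted sum into a Gauss sum and a first moment
    have hshift := sum_gaussTerm_mul_pqInt_mul hq hqp m (p ^ 2 * a) b (pqInt p q)
    have hsplit : ∑ j ∈ range (m + 1), gaussTerm p q m (p ^ 2 * a) (q * b) j * pqInt p q (j + 1)
        = p ^ m * gaussProd p q m (p * a) (q * b)
          + q * ∑ j ∈ range (m + 1),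
              gaussTerm p q m (p * a) (q * b) j * (p ^ (m - j) * pqInt p q j) := by
      rw [← sum_gaussTerm hq hqp, mul_sum, mul_sum, ← sum_add_distrib]
      refine sum_congr rfl fun j hj => ?_
      have hjm : j ≤ m := Nat.lt_succ_iff.1 (mem_range.1 hj)
      rw [pqInt_succ hqp.ne', show p ^ 2 * a = p * (p * a) by ring, ← gaussTerm_mul_pow]
      linear_combination gaussTerm p q m (p * a) (q * b) j * pow_sub_mul_pow p hjm
    have hfirst := sum_gaussTerm_mul_pqInt hq hqp m (p * a) (q * b)
    have hsq : ∀ k ∈ range (m + 2),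
        gaussTerm p q (m + 1) a b k * (p ^ (m + 1 - k + 1) * pqInt p q k) ^ 2
          = p ^ 2 * (gaussTerm p q (m + 1) (p ^ 2 * a) b k * pqInt p q k * pqInt p q k) := by
      intro k _
      rw [← gaussTerm_mul_pow]
      ring
    rw [sum_congr rfl hsq, ← mul_sum, hshift, hsplit, gaussProd_succ',
      Nat.add_sub_cancel]
    linear_combination (a + b) * p ^ 2 * pqInt p q (m + 1) * b * q * hfirst

def bbhWeight (p q : ℝ) (n : ℕ) (x : ℝ) (k : ℕ) : ℝ :=
  p * q / pqEll p q n x * gaussTerm p q n 1 x k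

lemma bbh_eq_sum_bbhWeight (n : ℕ) (f : ℝ → ℝ) (x : ℝ) :
    bbh p q n f x = ∑ k ∈ range (n + 1), bbhWeight p q n x k * f (pqNode p q n k) := by
  simp only [bbh, bbhWeight, gaussTerm, Nat.choose_two_right, one_pow, mul_sum]
  exact sum_congr rfl fun k _ => by ring

lemma pqEll_pos (hq : 0 ≤ q) (hp : 0 < p) (n : ℕ) {x : ℝ} (hx : 0 ≤ x) :
    0 < pqEll p q n x := by
  rw [pqEll_eq_gaussProd]
  exact gaussProd_pos hq hp n one_pos hx

lemma bbhWeight_nonneg (hq : 0 ≤ q) (hqp : q < p) (n : ℕ) {x : ℝ} (hx : 0 ≤ x) (k : ℕ) :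
    0 ≤ bbhWeight p q n x k := by
  have hp := hq.trans_lt hqp
  exact mul_nonneg (div_nonneg (by positivity) (pqEll_pos hq hp n hx).le)
    (gaussTerm_nonneg hq hqp n zero_le_one hx k)

lemma sum_bbhWeight (hq : 0 ≤ q) (hqp : q < p) (n : ℕ) {x : ℝ} (hx : 0 ≤ x) :
    ∑ k ∈ range (n + 1), bbhWeight p q n x k = p * q := by
  simp only [bbhWeight]
  rw [← mul_sum, sum_gaussTerm hq hqp, ← pqEll_eq_gaussProd,
    div_mul_cancel₀ _ (pqEll_pos hq (hq.trans_lt hqp) n hx).ne']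

lemma pqNode_nonneg (hq : 0 ≤ q) (hqp : q < p) (n k : ℕ) : 0 ≤ pqNode p q n k := by
  have : 0 ≤ p := hq.trans hqp.le
  exact div_nonneg (mul_nonneg (by positivity) (pqInt_nonneg hq hqp k))
    (mul_nonneg (pqInt_nonneg hq hqp _) (by positivity))

def pqNodeFrac (p q : ℝ) (n k : ℕ) : ℝ :=
  p ^ (n - k + 1) * pqInt p q k / pqInt p q (n + 1)

lemma pqNode_div_one_add (hq : 0 < q) (hqp : q < p) {n k : ℕ} (hk : k ≤ n) :
    pqNode p q n k / (1 + pqNode p q n k) = pqNodeFrac p q n k := by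
  have hB : 0 < pqInt p q (n - k + 1) * q ^ k :=
    mul_pos (pqInt_pos hq.le hqp (Nat.succ_ne_zero _)) (pow_pos hq k)
  have hD := pqInt_add hqp.ne' (n - k + 1) k
  rw [show n - k + 1 + k = n + 1 by omega] at hD
  rw [pqNode, pqNodeFrac, one_add_div hB.ne', div_div_div_cancel_right₀ hB.ne', hD]
  ring_nf

lemma sum_bbhWeight_mul_pqNodeFrac (hq : 0 ≤ q) (hqp : q < p) (n : ℕ) {x : ℝ} (hx : 0 ≤ x) :
    ∑ k ∈ range (n + 1), bbhWeight p q n x k * pqNodeFrac p q n k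
      = p ^ 2 * q * pqInt p q n / pqInt p q (n + 1) * (x / (1 + x)) := by
  have hℓ := pqEll_pos hq (hq.trans_lt hqp) n hx
  have hD : 0 < pqInt p q (n + 1) := pqInt_pos hq hqp n.succ_ne_zero
  have hx1 : 0 < 1 + x := by linarith
  have h := sum_gaussTerm_mul_pqInt hq hqp n 1 x
  rw [← pqEll_eq_gaussProd] at h
  calc ∑ k ∈ range (n + 1), bbhWeight p q n x k * pqNodeFrac p q n k
      = p ^ 2 * q / (pqEll p q n x * pqInt p q (n + 1)) *
          ∑ k ∈ range (n + 1), gaussTerm p q n 1 x k * (p ^ (n - k) * pqInt p q k) := by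
        rw [mul_sum]
        exact sum_congr rfl fun k _ => by simp only [bbhWeight, pqNodeFrac]; field_simp; ring
    _ = _ := by
        rw [eq_div_of_mul_eq hx1.ne' ((mul_comm _ _).trans h)]
        field_simp

lemma sum_bbhWeight_mul_pqNodeFrac_sq (hq : 0 ≤ q) (hqp : q < p) (n : ℕ) {x : ℝ}
    (hx : 0 ≤ x) :
    ∑ k ∈ range (n + 1), bbhWeight p q n x k * pqNodeFrac p q n k ^ 2
      = p ^ (n + 2) * q * pqInt p q n / pqInt p q (n + 1) ^ 2 * (x / (1 + x))
        + p ^ 3 * q ^ 3 * pqInt p q n * pqInt p q (n - 1) / pqInt p q (n + 1) ^ 2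
          * (x / (1 + x)) ^ 2 * ((1 + x) / (p + q * x)) := by
  have hℓ := pqEll_pos hq (hq.trans_lt hqp) n hx
  have hD : 0 < pqInt p q (n + 1) := pqInt_pos hq hqp n.succ_ne_zero
  have hx1 : 0 < 1 + x := by linarith
  have hpx : 0 < p + q * x := by have := hq.trans_lt hqp; positivity
  have h := sum_gaussTerm_mul_sq_pqInt hq hqp n 1 x
  rw [← pqEll_eq_gaussProd, mul_one] at h
  calc ∑ k ∈ range (n + 1), bbhWeight p q n x k * pqNodeFrac p q n k ^ 2
      = p * q / (pqEll p q n x * pqInt p q (n + 1) ^ 2) *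
          ∑ k ∈ range (n + 1), gaussTerm p q n 1 x k * (p ^ (n - k + 1) * pqInt p q k) ^ 2 := by
        rw [mul_sum]
        exact sum_congr rfl fun k _ => by simp only [bbhWeight, pqNodeFrac]; field_simp
    _ = _ := by
        rw [eq_div_of_mul_eq (by positivity) ((mul_comm _ _).trans h)]
        field_simp
        ring

lemma variance_coeff_le (hq : 0 ≤ q) (hqp : q ≤ p) (hp : p ≤ 1) {b c : ℝ} (hc : 0 ≤ c)
    (hpb : p * b ≤ 1) :
    p ^ 3 * q ^ 3 * c - 2 * p ^ 2 * q * b + p * q ≤ p ^ 2 * q ^ 3 * c - 2 * p * q * b + 1 := by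
  -- the difference is `(1-p)(p²q³c - 2pqb) + 1 - pq ≥ 1 - 2q + pq ≥ (1-q)²`
  nlinarith [mul_nonneg (mul_nonneg (sub_nonneg.2 hp) (by positivity : 0 ≤ p ^ 2 * q ^ 3)) hc,
    mul_nonneg (mul_nonneg hq (sub_nonneg.2 hp)) (sub_nonneg.2 hpb),
    mul_nonneg hq (sub_nonneg.2 hqp), sq_nonneg (1 - q)]

lemma mul_pqInt_le_pqInt_succ (hq : 0 ≤ q) (hqp : q < p) (n : ℕ) :
    p * pqInt p q n ≤ pqInt p q (n + 1) := by
  rw [add_comm n 1, pqInt_add hqp.ne']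
  nlinarith [pow_nonneg hq n, pqInt_nonneg hq hqp 1]

lemma sum_bbhWeight_mul_sq_sub_le (hq : 0 ≤ q) (hqp : q < p) (hp : p ≤ 1) (n : ℕ) {x : ℝ}
    (hx : 0 ≤ x) :
    ∑ k ∈ range (n + 1), bbhWeight p q n x k * (pqNodeFrac p q n k - x / (1 + x)) ^ 2
      ≤ pqDelta p q n x := by
  have hexpand :
      ∑ k ∈ range (n + 1), bbhWeight p q n x k * (pqNodeFrac p q n k - x / (1 + x)) ^ 2
      = ∑ k ∈ range (n + 1), bbhWeight p q n x k * pqNodeFrac p q n k ^ 2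
        - 2 * (x / (1 + x)) * ∑ k ∈ range (n + 1), bbhWeight p q n x k * pqNodeFrac p q n k
        + (x / (1 + x)) ^ 2 * ∑ k ∈ range (n + 1), bbhWeight p q n x k := by
    simp only [mul_sum, ← sum_sub_distrib, ← sum_add_distrib]
    exact sum_congr rfl fun k _ => by ring
  rw [hexpand, sum_bbhWeight_mul_pqNodeFrac_sq hq hqp n hx,
    sum_bbhWeight_mul_pqNodeFrac hq hqp n hx, sum_bbhWeight hq hqp n hx]
  have hD : 0 < pqInt p q (n + 1) := pqInt_pos hq hqp n.succ_ne_zero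
  set X := x / (1 + x)
  set b := pqInt p q n / pqInt p q (n + 1)
  set c := pqInt p q n * pqInt p q (n - 1) / pqInt p q (n + 1) ^ 2 * ((1 + x) / (p + q * x))
  have hc : 0 ≤ c := by
    have := hq.trans_lt hqp
    have := pqInt_nonneg hq hqp n
    have := pqInt_nonneg hq hqp (n - 1)
    positivity
  have hpb : p * b ≤ 1 := by
    rw [← mul_div_assoc, div_le_one hD]
    exact mul_pqInt_le_pqInt_succ hq hqp n
  calc _ = X ^ 2 * (p ^ 3 * q ^ 3 * c - 2 * p ^ 2 * q * b + p * q)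
          + p ^ (n + 2) * q * pqInt p q n / pqInt p q (n + 1) ^ 2 * X := by ring
    _ ≤ X ^ 2 * (p ^ 2 * q ^ 3 * c - 2 * p * q * b + 1)
          + p ^ (n + 2) * q * pqInt p q n / pqInt p q (n + 1) ^ 2 * X := by
        gcongr ?_ + _
        exact mul_le_mul_of_nonneg_left (variance_coeff_le hq hqp.le hp hc hpb) (sq_nonneg X)
    _ = pqDelta p q n x := by simp only [pqDelta, X, b, c]; ring

lemma sum_mul_abs_rpow_le {ι : Type*} (s : Finset ι) {w : ι → ℝ} (hw : ∀ i, 0 ≤ w i)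
    (hw1 : ∑ i ∈ s, w i ≤ 1) (d : ι → ℝ) {α : ℝ} (hα0 : 0 < α) (hα2 : α ≤ 2) :
    ∑ i ∈ s, w i * |d i| ^ α ≤ (∑ i ∈ s, w i * d i ^ 2) ^ (α / 2) := by
  have hexp : (1 : ℝ) ≤ 2 / α := by rw [le_div_iff₀ hα0]; linarith
  have hsq : ∀ i, (|d i| ^ α) ^ (2 / α) = d i ^ 2 := fun i => by
    rw [← Real.rpow_mul (abs_nonneg _), mul_div_cancel₀ _ hα0.ne', Real.rpow_two, sq_abs]
  have hmass : (∑ i ∈ s, w i) ^ (1 - α / 2) ≤ 1 :=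
    Real.rpow_le_one (sum_nonneg fun i _ => hw i) hw1 (by linarith)
  calc ∑ i ∈ s, w i * |d i| ^ α
      ≤ (∑ i ∈ s, w i) ^ (1 - (2 / α)⁻¹)
          * (∑ i ∈ s, w i * (|d i| ^ α) ^ (2 / α)) ^ (2 / α)⁻¹ :=
        Real.inner_le_weight_mul_Lp_of_nonneg s hexp _ _ hw fun i => by positivity
    _ = (∑ i ∈ s, w i) ^ (1 - α / 2) * (∑ i ∈ s, w i * d i ^ 2) ^ (α / 2) := by
        simp only [hsq, inv_div]
    _ ≤ (∑ i ∈ s, w i * d i ^ 2) ^ (α / 2) :=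
        mul_le_of_le_one_left
          (Real.rpow_nonneg (sum_nonneg fun i _ => mul_nonneg (hw i) (sq_nonneg _)) _) hmass

theorem bbh_lipschitz_estimate_Ici_general (n : ℕ) (p q : ℝ)
    (hq : 0 < q) (hqp : q < p) (hp : p ≤ 1)
    (α : ℝ) (hα0 : 0 < α) (hα1 : α ≤ 1) (M : ℝ) (hM : 0 < M)
    (f : ℝ → ℝ)
    (hf : ∀ t : ℝ, 0 ≤ t → ∀ y : ℝ, 0 ≤ y →
      |f t - f y| ≤ M * |t / (1 + t) - y / (1 + y)| ^ α)
    (x : ℝ) (hx : 0 ≤ x) :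
    |bbh p q n f x - p * q * f x| ≤ M * pqDelta p q n x ^ (α / 2) := by
  set w := bbhWeight p q n x
  set X := x / (1 + x)
  have hw := bbhWeight_nonneg hq.le hqp n hx
  have hw1 : ∑ k ∈ range (n + 1), w k = p * q := sum_bbhWeight hq.le hqp n hx
  have hmass : ∑ k ∈ range (n + 1), w k ≤ 1 :=
    hw1.trans_le (mul_le_one₀ hp hq.le (hqp.le.trans hp))
  have hlip : ∀ k ∈ range (n + 1),
      |f (pqNode p q n k) - f x| ≤ M * |pqNodeFrac p q n k - X| ^ α :=
    fun k hk => by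
      simpa only [pqNode_div_one_add hq hqp (Nat.lt_succ_iff.1 (mem_range.1 hk))]
        using hf _ (pqNode_nonneg hq.le hqp n k) x hx
  calc |bbh p q n f x - p * q * f x|
      = |∑ k ∈ range (n + 1), w k * (f (pqNode p q n k) - f x)| := by
        simp only [bbh_eq_sum_bbhWeight, mul_sub, sum_sub_distrib, ← sum_mul, hw1, w]
    _ ≤ ∑ k ∈ range (n + 1), w k * (M * |pqNodeFrac p q n k - X| ^ α) := by
        refine (abs_sum_le_sum_abs _ _).trans (sum_le_sum fun k hk => ?_)
        rw [abs_mul, abs_of_nonneg (hw k)]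
        exact mul_le_mul_of_nonneg_left (hlip k hk) (hw k)
    _ = M * ∑ k ∈ range (n + 1), w k * |pqNodeFrac p q n k - X| ^ α := by
        rw [mul_sum]
        exact sum_congr rfl fun k _ => by ring
    _ ≤ M * (∑ k ∈ range (n + 1), w k * (pqNodeFrac p q n k - X) ^ 2) ^ (α / 2) := by
        gcongr
        exact sum_mul_abs_rpow_le _ hw hmass _ hα0 (by linarith)
    _ ≤ M * pqDelta p q n x ^ (α / 2) := by
        gcongr
        · exact sum_nonneg fun k _ => mul_nonneg (hw k) (sq_nonneg _)
        · exact sum_bbhWeight_mul_sq_sub_le hq.le hqp hp n hx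

/-- Corollary 3.3, Lipschitz-type estimate for `E = [0,∞)`. -/
theorem bbh_lipschitz_estimate_Ici (n : ℕ) (hn : 1 ≤ n) (p q : ℝ)
    (hq : 0 < q) (hqp : q < p) (hp : p ≤ 1)
    (α : ℝ) (hα0 : 0 < α) (hα1 : α ≤ 1) (M : ℝ) (hM : 0 < M)
    (f : ℝ → ℝ)
    (hfb : ∃ C : ℝ, ∀ t : ℝ, 0 ≤ t → |f t| ≤ C)
    (hfc : ContinuousOn f (Set.Ici 0))
    (hf : ∀ t : ℝ, 0 ≤ t → ∀ y : ℝ, 0 ≤ y →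
      |f t - f y| ≤ M * |t / (1 + t) - y / (1 + y)| ^ α)
    (x : ℝ) (hx : 0 ≤ x) :
    |bbh p q n f x - p * q * f x| ≤ M * pqDelta p q n x ^ (α / 2) :=
  bbh_lipschitz_estimate_Ici_general n p q hq hqp hp α hα0 hα1 M hM f hf x hx
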